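/- If (T,⊆) is a κ-Aronszajn tree with T ⊆ {}^{<κ}ω streamlined, then the lexicographically ordered set (T,<_lex) contains no suborder isomorphic to κ or to κ* (the reverse of κ). -/

import Mathlib

noncomputable section
open Cardinal Set

/-- A node of a streamlined tree: a partial function from ordinals to `ℕ`,
encoded as an `Option ℕ`-valued function; its domain is meant to be an ordinal. -/
abbrev ONode : Type 1 := Ordinal → Option ℕ

/-- `t` has domain exactly the ordinal `α`. -/
def nodeDom (t : ONode) (α : Ordinal) : Prop := ∀ γ, (t γ).isSome ↔ γ < α

/-- The restriction `t ↾ β`. -/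
def nrestrict (t : ONode) (β : Ordinal) : ONode := fun γ => if γ < β then t γ else none

/-- `nExt t s` says that `s` extends `t`, i.e. `t ⊆ s` as functions. -/
def nExt (t s : ONode) : Prop := ∀ γ, (t γ).isSome → s γ = t γ

/-- Incompatibility of two nodes in the tree order `⊆`. -/
def nIncomp (s t : ONode) : Prop := ¬ nExt s t ∧ ¬ nExt t s

/-- The `α`-th level of `T`. -/
def levelSet (T : Set ONode) (α : Ordinal) : Set ONode := {t ∈ T | nodeDom t α}

/-- `T ⊆ {}^{<κ}ω` is a streamlined `κ`-tree. -/
structure IsStreamTree (κ : Cardinal.{0}) (T : Set ONode) : Prop where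
  hdom : ∀ t ∈ T, ∃ α < κ.ord, nodeDom t α
  down : ∀ t ∈ T, ∀ β, nrestrict t β ∈ T
  level_ne : ∀ α < κ.ord, (levelSet T α).Nonempty
  level_small : ∀ α < κ.ord, Cardinal.mk ↥(levelSet T α) < Cardinal.lift.{1} κ

/-- The lexicographic (strict) order on nodes: `s <_lex t` iff `s ⊊ t`, or
`s(Δ) < t(Δ)` at the least point `Δ` of disagreement. -/
def lexLT (s t : ONode) : Prop :=
  (nExt s t ∧ s ≠ t) ∨
  ∃ Δ m n, (∀ γ < Δ, s γ = t γ) ∧ s Δ = some m ∧ t Δ = some n ∧ m < n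

/-- `T` has a chain (branch) of size `κ`. -/
def HasKappaBranch (κ : Cardinal.{0}) (T : Set ONode) : Prop :=
  ∃ B ⊆ T, (∀ s ∈ B, ∀ t ∈ B, nExt s t ∨ nExt t s) ∧
    Cardinal.lift.{1} κ ≤ Cardinal.mk ↥B

/-- A `ϱ`-modification: a finitely supported integer correction term, whose support
is a finite set of non-limit ordinals below `κ` containing `0`. -/
structure RhoMod (κ : Cardinal.{0}) where
  x : Finset Ordinal
  zero_mem : (0 : Ordinal) ∈ x
  mem_nacc : ∀ β ∈ x, β < κ.ord ∧ ¬ Order.IsSuccLimit β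
  f : Ordinal → ℤ

/-- `max (dom η ∩ (β+1))`: the largest point of the support of `η` that is `≤ β`. -/
def RhoMod.anchor {κ : Cardinal.{0}} (η : RhoMod κ) (β : Ordinal) : Ordinal :=
  (η.x.filter (· ≤ β)).max' ⟨0, Finset.mem_filter.2 ⟨η.zero_mem, by simp⟩⟩

/-- `η * τ` is everywhere defined (takes values in `ω`). -/
def rhoDefined {κ : Cardinal.{0}} (η : RhoMod κ) (t : ONode) : Prop :=
  ∀ γ n, t γ = some n → 0 ≤ η.f (η.anchor γ) + (n : ℤ)

/-- The action `η * t` of a `ϱ`-modification on a node. -/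
def rhoAct {κ : Cardinal.{0}} (η : RhoMod κ) (t : ONode) : ONode :=
  fun γ => (t γ).map fun n => (η.f (η.anchor γ) + (n : ℤ)).toNat

/-- `T` is `ϱ`-uniform: closed under all (defined) `ϱ`-modifications. -/
def RhoUniform (κ : Cardinal.{0}) (T : Set ONode) : Prop :=
  ∀ t ∈ T, ∀ η : RhoMod κ, rhoDefined η t → rhoAct η t ∈ T

/-- `T` is `ϱ`-coherent: any two nodes on a common level are `ϱ`-modifications of each other. -/
def RhoCoherent (κ : Cardinal.{0}) (T : Set ONode) : Prop :=
  ∀ α < κ.ord, ∀ s ∈ levelSet T α, ∀ t ∈ levelSet T α,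
    ∃ η : RhoMod κ, rhoDefined η t ∧ rhoAct η t = s

/-- The cone `T_{[s]}`. -/
def cone (T : Set ONode) (s : ONode) : Set ONode := {t ∈ T | nExt t s ∨ nExt s t}

/-- The frozen cone `T_{[s,i]}`. -/
def frozenCone (T : Set ONode) (s : ONode) (i : ℕ) : Set ONode :=
  {t ∈ T | nExt t s ∨ (nExt s t ∧ ∀ ξ n, ¬ (s ξ).isSome → t ξ = some n → i ≤ n)}

/-!
Let `(f γ)_{γ<κ}` be lexicographically increasing in `T`. By induction on `β < κ`, the coordinate
`γ ↦ f γ β` is eventually constant: once all coordinates below `β` have stabilised (regularity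
gives a common threshold), lexicographic monotonicity makes the `β`-th coordinate monotone in
`WithBot ℕ` (antitone for a decreasing sequence), and a monotone `κ`-sequence with fewer than `κ`
values is eventually constant. The eventual restrictions `f γ ↾ β` then form a chain with one node
on every level below `κ`, i.e. a `κ`-branch; they do have height `β`, since an injective `f`
cannot be eventually undefined below `β`.
-/

open Order

universe u

def EventuallyConstBelow {X : Type*} (o : Ordinal.{u}) (g : Ordinal.{u} → X) : Prop :=
  ∃ γ₀ < o, ∀ γ, γ₀ ≤ γ → γ < o → g γ = g γ₀

section Regular

variable {κ : Cardinal.{u}}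

theorem exists_unbounded_fiber (hκ : κ.IsRegular) {ι : Type u} (hι : #ι < κ)
    (F : Ordinal.{u} → ι) : ∃ i, ∀ c < κ.ord, ∃ γ, c < γ ∧ γ < κ.ord ∧ F γ = i := by
  by_contra! h
  choose g hgκ hg using h
  have hsup : succ (⨆ i, g i) < κ.ord :=
    (isSuccLimit_ord hκ.aleph0_le).succ_lt
      (Ordinal.iSup_lt_of_lt_cof (by rwa [hκ.cof_ord]) hgκ)
  exact hg _ _ ((Ordinal.le_iSup g _).trans_lt (lt_succ _)) hsup rfl

theorem MonotoneOn.eventuallyConstBelow (hκ : κ.IsRegular) {α : Type u} [PartialOrder α]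
    (hα : #α < κ) {v : Ordinal.{u} → α} {γ₀ : Ordinal.{u}} (hγ₀ : γ₀ < κ.ord)
    (hv : MonotoneOn v (Ico γ₀ κ.ord)) : EventuallyConstBelow κ.ord v := by
  obtain ⟨c, hc⟩ := exists_unbounded_fiber hκ hα v
  obtain ⟨γ₁, hγ₀₁, hγ₁, rfl⟩ := hc γ₀ hγ₀
  refine ⟨γ₁, hγ₁, fun γ hγ₁γ hγ => ?_⟩
  obtain ⟨γ₂, hγγ₂, hγ₂, hv₂⟩ := hc γ hγ
  have mem : ∀ {δ}, γ₁ ≤ δ → δ < κ.ord → δ ∈ Ico γ₀ κ.ord :=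
    fun h h' => ⟨hγ₀₁.le.trans h, h'⟩
  refine le_antisymm ?_ (hv (mem le_rfl hγ₁) (mem hγ₁γ hγ) hγ₁γ)
  calc v γ ≤ v γ₂ := hv (mem hγ₁γ hγ) (mem (hγ₁γ.trans hγγ₂.le) hγ₂) hγγ₂.le
    _ = v γ₁ := hv₂

theorem eventuallyConstBelow_restrict (hκ : κ.IsRegular) {X : Type*} {β : Ordinal.{u}}
    (hβ : β < κ.ord) {g : Ordinal.{u} → Ordinal.{u} → X}
    (hg : ∀ ξ < β, EventuallyConstBelow κ.ord fun γ => g γ ξ) :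
    EventuallyConstBelow κ.ord fun γ (ξ : Iio β) => g γ ξ := by
  choose! t htκ ht using hg
  have hsup : ⨆ ξ : Iio β, t ξ < κ.ord := by
    refine Ordinal.lift_iSup_lt_of_lt_cof.{u, u + 1} ?_ fun ξ => htκ ξ.1 ξ.2
    rw [mk_Iio_ordinal, ← Ordinal.lift_cof, hκ.cof_ord, lift_id'.{u, u + 1}, lift_lt]
    exact lt_ord.1 hβ
  refine ⟨⨆ ξ : Iio β, t ξ, hsup, fun γ hγ hγκ => funext fun ⟨ξ, hξ⟩ => ?_⟩
  have hle : t ξ ≤ ⨆ ξ : Iio β, t ξ := Ordinal.le_iSup (fun ξ : Iio β => t ξ) ⟨ξ, hξ⟩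
  exact (ht ξ hξ γ (hle.trans hγ) hγκ).trans (ht ξ hξ _ hle hsup).symm

theorem eventuallyConstBelow_of_lexMonotone (hκ : κ.IsRegular) {α : Type u} [PartialOrder α]
    (hα : #α < κ) {f : Ordinal.{u} → Ordinal.{u} → α}
    (hf : ∀ β γ γ', γ < γ' → γ' < κ.ord → (∀ ξ < β, f γ ξ = f γ' ξ) → f γ β ≤ f γ' β) :
    ∀ β < κ.ord, EventuallyConstBelow κ.ord fun γ => f γ β := by
  intro β
  induction β using WellFoundedLT.induction with
  | _ β ih =>
  intro hβ
  obtain ⟨γ₀, hγ₀, hconst⟩ :=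
    eventuallyConstBelow_restrict hκ hβ fun ξ hξ => ih ξ hξ (hξ.trans hβ)
  have hagree : ∀ γ ∈ Ico γ₀ κ.ord, ∀ ξ < β, f γ ξ = f γ₀ ξ :=
    fun γ hγ ξ hξ => congrFun (hconst γ hγ.1 hγ.2) ⟨ξ, hξ⟩
  refine MonotoneOn.eventuallyConstBelow hκ hα hγ₀ fun γ hγ γ' hγ' hle => ?_
  rcases hle.eq_or_lt with rfl | hlt
  · exact le_rfl
  · exact hf β γ γ' hlt hγ'.2 fun ξ hξ => (hagree γ hγ ξ hξ).trans (hagree γ' hγ' ξ hξ).symm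

end Regular

section Nodes

variable {s t : ONode} {α α' β β' ξ : Ordinal}

theorem nodeDom.eq_none_of_le (ht : nodeDom t α) (hξ : t ξ = none) {ζ : Ordinal} (hξζ : ξ ≤ ζ) :
    t ζ = none := by
  have hαξ : α ≤ ξ := not_lt.1 fun h => by simpa [hξ] using (ht ξ).2 h
  exact Option.not_isSome_iff_eq_none.1 fun h => (hαξ.trans hξζ).not_gt ((ht ζ).1 h)

theorem nodeDom.unique (h : nodeDom t α) (h' : nodeDom t α') : α = α' :=
  eq_of_forall_lt_iff fun γ => (h γ).symm.trans (h' γ)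

theorem eq_of_eq_below_of_eq_none (hs : nodeDom s α) (ht : nodeDom t α') (hξβ : ξ < β)
    (hξ : s ξ = none) (hst : ∀ ζ < β, s ζ = t ζ) : s = t := by
  funext ζ
  by_cases hζ : ζ < β
  · exact hst ζ hζ
  · have hle : ξ ≤ ζ := hξβ.le.trans (not_lt.1 hζ)
    rw [hs.eq_none_of_le hξ hle, ht.eq_none_of_le ((hst ξ hξβ).symm.trans hξ) hle]

theorem nodeDom_nrestrict (ht : ∀ ξ < β, (t ξ).isSome) : nodeDom (nrestrict t β) β := by
  intro γ
  by_cases hγ : γ < β <;> simp [nrestrict, hγ, ht]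

theorem nrestrict_congr (h : ∀ ξ < β, s ξ = t ξ) : nrestrict s β = nrestrict t β := by
  funext ξ
  by_cases hξ : ξ < β <;> simp [nrestrict, hξ, h]

theorem nExt_nrestrict_of_le (h : β ≤ β') : nExt (nrestrict t β) (nrestrict t β') := by
  intro ξ hξ
  have hξβ : ξ < β := by
    by_contra hξβ
    simp [nrestrict, hξβ] at hξ
  simp [nrestrict, hξβ, hξβ.trans_le h]

theorem lexLT_irrefl (s : ONode) : ¬ lexLT s s := by
  rintro (⟨-, h⟩ | ⟨Δ, m, n, -, hm, hn, hmn⟩)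
  · exact h rfl
  · cases hm.symm.trans hn
    exact hmn.false

-- `Option ℕ` carries core's `LE` but no `PartialOrder`; `WithBot ℕ` is the same type, ordered
-- by Mathlib.
theorem lexLT.apply_le_of_eq_below (h : lexLT s t) (hst : ∀ ξ < β, s ξ = t ξ) :
    @LE.le (WithBot ℕ) _ (s β) (t β) := by
  rcases h with ⟨hext, -⟩ | ⟨Δ, m, n, hΔ, hs, ht, hmn⟩
  · cases hsβ : s β with
    | none => exact bot_le
    | some p => rw [hext β (by simp [hsβ]), hsβ]; exact le_rfl
  · rcases lt_trichotomy Δ β with hlt | rfl | hgt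
    · cases hs.symm.trans ((hst Δ hlt).trans ht)
      exact absurd hmn (lt_irrefl m)
    · rw [hs, ht]
      exact WithBot.coe_le_coe.2 hmn.le
    · rw [hΔ β hgt]; exact le_rfl

end Nodes

theorem hasKappaBranch_of_chain {κ : Cardinal.{0}} {T : Set ONode} (b : Ordinal → ONode)
    (hbT : ∀ β < κ.ord, b β ∈ T) (hdom : ∀ β < κ.ord, nodeDom (b β) β)
    (hchain : ∀ β β', β < β' → β' < κ.ord → nExt (b β) (b β')) : HasKappaBranch κ T := by
  refine ⟨b '' Iio κ.ord, image_subset_iff.2 fun β hβ => hbT β hβ, ?_, ?_⟩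
  · rintro _ ⟨β, hβ, rfl⟩ _ ⟨β', hβ', rfl⟩
    rcases lt_trichotomy β β' with h | rfl | h
    · exact .inl (hchain β β' h hβ')
    · exact .inl fun _ _ => rfl
    · exact .inr (hchain β' β h hβ)
  · have hinj : InjOn b (Iio κ.ord) := fun β hβ β' hβ' h =>
      (hdom β hβ).unique (h ▸ hdom β' hβ')
    rw [mk_image_eq_of_injOn _ _ hinj, mk_Iio_ordinal, card_ord]

theorem hasKappaBranch_of_eventuallyConstBelow {κ : Cardinal.{0}} (hκ : κ.IsRegular)
    {T : Set ONode} (hT : IsStreamTree κ T) {f : Ordinal → ONode} (hfT : ∀ γ < κ.ord, f γ ∈ T)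
    (hinj : ∀ γ γ', γ < γ' → γ' < κ.ord → f γ ≠ f γ')
    (hf : ∀ β < κ.ord, EventuallyConstBelow κ.ord fun γ => f γ β) : HasKappaBranch κ T := by
  choose! γ₀ hγ₀ hconst using fun β (hβ : β < κ.ord) =>
    eventuallyConstBelow_restrict hκ hβ fun ξ hξ => hf ξ (hξ.trans hβ)
  have hagree : ∀ β < κ.ord, ∀ γ, γ₀ β ≤ γ → γ < κ.ord → ∀ ξ < β, f γ ξ = f (γ₀ β) ξ :=
    fun β hβ γ h h' ξ hξ => congrFun (hconst β hβ γ h h') ⟨ξ, hξ⟩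
  have hdef : ∀ β < κ.ord, ∀ ξ < β, (f (γ₀ β) ξ).isSome := by
    intro β hβ ξ hξ
    by_contra hnone
    have hsucc : succ (γ₀ β) < κ.ord := (isSuccLimit_ord hκ.aleph0_le).succ_lt (hγ₀ β hβ)
    obtain ⟨α, -, hα⟩ := hT.hdom _ (hfT _ (hγ₀ β hβ))
    obtain ⟨α', -, hα'⟩ := hT.hdom _ (hfT _ hsucc)
    exact hinj _ _ (lt_succ _) hsucc <| eq_of_eq_below_of_eq_none hα hα' hξ
      (Option.not_isSome_iff_eq_none.1 hnone)
      fun ζ hζ => (hagree β hβ _ (le_succ _) hsucc ζ hζ).symm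
  refine hasKappaBranch_of_chain (fun β => nrestrict (f (γ₀ β)) β)
    (fun β hβ => hT.down _ (hfT _ (hγ₀ β hβ)) β) (fun β hβ => nodeDom_nrestrict (hdef β hβ)) ?_
  intro β β' hββ' hβ'
  have hβ := hββ'.trans hβ'
  have hγ : max (γ₀ β) (γ₀ β') < κ.ord := max_lt (hγ₀ β hβ) (hγ₀ β' hβ')
  rw [nrestrict_congr fun ξ hξ => (hagree β hβ _ (le_max_left _ _) hγ ξ hξ).symm,
    nrestrict_congr fun ξ hξ => (hagree β' hβ' _ (le_max_right _ _) hγ ξ hξ).symm]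
  exact nExt_nrestrict_of_le hββ'.le

/-- The lexicographic ordering of a streamlined `κ`-Aronszajn tree contains no suborder
isomorphic to `κ` nor to `κ*`. -/
theorem stmt18 (κ : Cardinal.{0}) (hreg : κ.IsRegular) (hunc : Cardinal.aleph0 < κ)
    (T : Set ONode) (hT : IsStreamTree κ T) (hAron : ¬ HasKappaBranch κ T) :
    (¬ ∃ f : Ordinal → ONode, (∀ γ < κ.ord, f γ ∈ T) ∧
      ∀ γ₁ γ₂, γ₁ < γ₂ → γ₂ < κ.ord → lexLT (f γ₁) (f γ₂)) ∧
    (¬ ∃ f : Ordinal → ONode, (∀ γ < κ.ord, f γ ∈ T) ∧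
      ∀ γ₁ γ₂, γ₁ < γ₂ → γ₂ < κ.ord → lexLT (f γ₂) (f γ₁)) := by
  have hα : #(WithBot ℕ) < κ := by simpa using hunc
  refine ⟨fun ⟨f, hfT, hlex⟩ => hAron ?_, fun ⟨f, hfT, hlex⟩ => hAron ?_⟩
  · refine hasKappaBranch_of_eventuallyConstBelow hreg hT hfT
      (fun γ γ' h h' he => lexLT_irrefl _ (he ▸ hlex γ γ' h h')) ?_
    exact eventuallyConstBelow_of_lexMonotone (α := WithBot ℕ) (f := f) hreg hα
      fun β γ γ' h h' hst => (hlex γ γ' h h').apply_le_of_eq_below hst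
  · refine hasKappaBranch_of_eventuallyConstBelow hreg hT hfT
      (fun γ γ' h h' he => lexLT_irrefl _ (he ▸ hlex γ γ' h h')) ?_
    exact eventuallyConstBelow_of_lexMonotone (α := (WithBot ℕ)ᵒᵈ) (f := f) hreg hα
      fun β γ γ' h h' hst => (hlex γ γ' h h').apply_le_of_eq_below fun ξ hξ => (hst ξ hξ).symm
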